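/- Weakening is not strongly admissible in Core logic in the absurdity case needed for the Lewis paradox: the sequent B, ¬A, A ⊢ ∅ is not derivable in the Core sequent calculus when A and B are distinct propositional variables, even though ¬A, A ⊢ ∅ is derivable. -/
import Mathlib


inductive Form : Type where
  | var : Nat → Form
  | neg : Form → Form
  | conj : Form → Form → Form
  | disj : Form → Form → Form
  | imp : Form → Form → Form
deriving DecidableEq

open Form

/-- Sequent calculus for propositional Core logic (Tennant).
Contexts are finite sets of formulas; the conclusion is `some C` or `none`
(the empty / absurdity conclusion ⊥). -/
inductive Core : Finset Form → Option Form → Prop where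
  | ax (A : Form) : Core {A} (some A)
  | lneg {Δ : Finset Form} {A : Form} :
      Core Δ (some A) → Core (insert (Form.neg A) Δ) none
  | rneg {Δ : Finset Form} {A : Form} :
      Core (insert A Δ) none → Core Δ (some (Form.neg A))
  | landL {Δ : Finset Form} {x : Option Form} (A B : Form) :
      Core Δ x → (Δ ∩ {A, B}).Nonempty →
      Core (insert (Form.conj A B) (Δ \ {A, B})) x
  | randR {Δ Γ : Finset Form} {A B : Form} :
      Core Δ (some A) → Core Γ (some B) → Core (Δ ∪ Γ) (some (Form.conj A B))
  | lor {Δ Γ : Finset Form} {A B : Form} {x y z : Option Form} :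
      Core (insert A Δ) x → Core (insert B Γ) y →
      ((x = z ∧ (y = z ∨ y = none)) ∨ (y = z ∧ x = none)) →
      Core (insert (Form.disj A B) (Δ ∪ Γ)) z
  | ror1 {Δ : Finset Form} {A : Form} (B : Form) :
      Core Δ (some A) → Core Δ (some (Form.disj A B))
  | ror2 {Δ : Finset Form} {B : Form} (A : Form) :
      Core Δ (some B) → Core Δ (some (Form.disj A B))
  | limp {Δ Γ : Finset Form} {A B : Form} {x : Option Form} :
      Core Δ (some A) → Core (insert B Γ) x →
      Core (insert (Form.imp A B) (Δ ∪ Γ)) x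
  | rimpa {Δ : Finset Form} {A : Form} (B : Form) :
      Core (insert A Δ) none → Core Δ (some (Form.imp A B))
  | rimpb {Δ : Finset Form} {B : Form} (A : Form) :
      Core Δ (some B) → Core (Δ \ {A}) (some (Form.imp A B))

def Form.simple : Form → Prop
  | Form.conj _ _ => False
  | Form.disj _ _ => False
  | Form.imp _ _ => False
  | _ => True

lemma core_atomic {Δ : Finset Form} {n : Nat}
    (h : Core Δ (some (Form.var n))) (hs : ∀ f ∈ Δ, f.simple) :
    Δ = {Form.var n} := by
  cases h with
  | ax A => rfl
  | landL A B h1 h2 =>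
      exact absurd (hs _ (Finset.mem_insert_self _ _)) (by simp [Form.simple])
  | lor h1 h2 h3 =>
      exact absurd (hs _ (Finset.mem_insert_self _ _)) (by simp [Form.simple])
  | limp h1 h2 =>
      exact absurd (hs _ (Finset.mem_insert_self _ _)) (by simp [Form.simple])

/-- B, ¬A, A ⊢ ∅ is not Core-derivable for distinct atoms A, B,
even though ¬A, A ⊢ ∅ is. -/
theorem core_no_weakening_absurdity (p q : Nat) (h : p ≠ q) :
    ¬ Core ({Form.var q, Form.neg (Form.var p), Form.var p} : Finset Form) none ∧
    Core ({Form.neg (Form.var p), Form.var p} : Finset Form) none := by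
  constructor
  · intro hc
    generalize heq : ({Form.var q, Form.neg (Form.var p), Form.var p} : Finset Form) = S at hc
    cases hc with
    | lneg hd =>
        rename_i Δ A
        -- neg A ∈ the set, so A = var p
        have hmem : Form.neg A ∈ ({Form.var q, Form.neg (Form.var p), Form.var p} : Finset Form) := by
          rw [heq]; exact Finset.mem_insert_self _ _
        have hA : A = Form.var p := by
          simp [Finset.mem_insert] at hmem
          exact hmem
        subst hA
        have hsub : Δ ⊆ ({Form.var q, Form.neg (Form.var p), Form.var p} : Finset Form) := by
          rw [heq]; exact Finset.subset_insert _ _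
        have hs : ∀ f ∈ Δ, f.simple := by
          intro f hf
          have := hsub hf
          simp [Finset.mem_insert, Finset.mem_singleton] at this
          rcases this with rfl | rfl | rfl <;> trivial
        have hΔ := core_atomic hd hs
        have hq : Form.var q ∈ insert (Form.neg (Form.var p)) Δ := by
          rw [← heq]; simp
        rcases Finset.mem_insert.mp hq with h1 | h1
        · exact absurd h1 (by simp)
        · rw [hΔ] at h1
          simp at h1
          exact h (h1.symm)
    | landL A B h1 h2 =>
        have : Form.conj A B ∈ ({Form.var q, Form.neg (Form.var p), Form.var p} : Finset Form) := by
          rw [heq]; exact Finset.mem_insert_self _ _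
        simp at this
    | lor h1 h2 h3 =>
        rename_i A B x y
        have : Form.disj A B ∈ ({Form.var q, Form.neg (Form.var p), Form.var p} : Finset Form) := by
          rw [heq]; exact Finset.mem_insert_self _ _
        simp at this
    | limp h1 h2 =>
        rename_i A B
        have : Form.imp A B ∈ ({Form.var q, Form.neg (Form.var p), Form.var p} : Finset Form) := by
          rw [heq]; exact Finset.mem_insert_self _ _
        simp at this
  · exact Core.lneg (Core.ax (Form.var p))
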